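/- The monotone contingency logic M^Δ is strongly complete with respect to the class of (m)-frames: every M^Δ-consistent set of formulas is satisfiable at some state of some neighborhood model whose neighborhood function at every state is closed under supersets. -/

import Mathlib

/-- The language L(Δ) of contingency logic: φ ::= p | ¬φ | (φ ∧ φ) | Δφ. -/
inductive Formula (P : Type) : Type
  | atom : P → Formula P
  | neg : Formula P → Formula P
  | and : Formula P → Formula P → Formula P
  | delta : Formula P → Formula P

namespace Formula

variable {P : Type}

/-- φ ∨ ψ abbreviates ¬(¬φ ∧ ¬ψ). -/
def or (φ ψ : Formula P) : Formula P := neg (and (neg φ) (neg ψ))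

/-- φ → ψ abbreviates ¬(φ ∧ ¬ψ). -/
def imp (φ ψ : Formula P) : Formula P := neg (and φ (neg ψ))

/-- φ ↔ ψ abbreviates (φ → ψ) ∧ (ψ → φ). -/
def iffF (φ ψ : Formula P) : Formula P := and (imp φ ψ) (imp ψ φ)

end Formula

/-- ⊤ : a fixed tautology (p ∨ ¬p for a fixed propositional variable p). -/
noncomputable def Formula.top (P : Type) [Nonempty P] : Formula P :=
  Formula.or (Formula.atom (Classical.arbitrary P))
    (Formula.neg (Formula.atom (Classical.arbitrary P)))

/-- A neighborhood model ⟨S, N, V⟩: a nonempty set of states `S`, a neighborhood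
function `N : S → P(P(S))` and a valuation `V`. -/
structure NbhdModel (P : Type) where
  S : Type
  nonempty : Nonempty S
  N : S → Set (Set S)
  V : P → Set S

/-- The truth set ⟦φ⟧ of a formula in a neighborhood model; the clause for `Δφ` says
that a state `s` satisfies `Δφ` iff ⟦φ⟧ ∈ N(s) or S ∖ ⟦φ⟧ ∈ N(s). -/
def NbhdModel.truthSet {P : Type} (M : NbhdModel P) : Formula P → Set M.S
  | .atom p => M.V p
  | .neg φ => (M.truthSet φ)ᶜ
  | .and φ ψ => M.truthSet φ ∩ M.truthSet ψ
  | .delta φ => {s | M.truthSet φ ∈ M.N s ∨ (M.truthSet φ)ᶜ ∈ M.N s}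

/-- Satisfaction: M,s ⊨ φ. -/
def NbhdModel.sat {P : Type} (M : NbhdModel P) (s : M.S) (φ : Formula P) : Prop :=
  s ∈ M.truthSet φ

/-- Frame property (m): closure under supersets. -/
def SupersetClosed {S : Type} (N : S → Set (Set S)) : Prop :=
  ∀ s : S, ∀ X Y : Set S, X ∈ N s → X ⊆ Y → Y ∈ N s

/-- Frame property (c): closure under binary intersections. -/
def InterClosed {S : Type} (N : S → Set (Set S)) : Prop :=
  ∀ s : S, ∀ X Y : Set S, X ∈ N s → Y ∈ N s → X ∩ Y ∈ N s

/-- Frame property (n): contains the unit. -/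
def ContainsUnit {S : Type} (N : S → Set (Set S)) : Prop :=
  ∀ s : S, (Set.univ : Set S) ∈ N s

/-- Frame property (z): closure under complements. -/
def ComplClosed {S : Type} (N : S → Set (Set S)) : Prop :=
  ∀ s : S, ∀ X : Set S, X ∈ N s → Xᶜ ∈ N s

/-- The supplementation of a neighborhood function:
`N⁺(s) = {X ⊆ S : Y ⊆ X for some Y ∈ N(s)}`. -/
def suppN {S : Type} (N : S → Set (Set S)) (s : S) : Set (Set S) :=
  {X | ∃ Y ∈ N s, Y ⊆ X}

/-- `φ` is a substitution instance of a propositional tautology: every Boolean valuation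
of formulas that respects `¬` and `∧` (treating atoms and Δ-formulas as atomic) makes
`φ` true. -/
def Tautology {P : Type} (φ : Formula P) : Prop :=
  ∀ v : Formula P → Bool,
    (∀ ψ, v (Formula.neg ψ) = !(v ψ)) →
    (∀ ψ χ, v (Formula.and ψ χ) = (v ψ && v χ)) →
    v φ = true

/-- Derivability in the system E^Δ (TAUT + ΔEqu + MP + REΔ) extended with the
additional axioms in `Ax`. -/
inductive Deriv {P : Type} (Ax : Set (Formula P)) : Formula P → Prop
  | ax {φ} (h : φ ∈ Ax) : Deriv Ax φ
  | taut {φ} (h : Tautology φ) : Deriv Ax φ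
  | equ (φ) : Deriv Ax (Formula.iffF (Formula.delta φ) (Formula.delta (Formula.neg φ)))
  | mp {φ ψ} (h1 : Deriv Ax (Formula.imp φ ψ)) (h2 : Deriv Ax φ) : Deriv Ax ψ
  | re {φ ψ} (h : Deriv Ax (Formula.iffF φ ψ)) :
      Deriv Ax (Formula.iffF (Formula.delta φ) (Formula.delta ψ))

/-- Derivability of `φ` from the set of premises `Γ` in the system E^Δ + `Ax`. -/
inductive DerivFrom {P : Type} (Ax Γ : Set (Formula P)) : Formula P → Prop
  | mem {φ} (h : φ ∈ Γ) : DerivFrom Ax Γ φ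
  | thm {φ} (h : Deriv Ax φ) : DerivFrom Ax Γ φ
  | mp {φ ψ} (h1 : DerivFrom Ax Γ (Formula.imp φ ψ)) (h2 : DerivFrom Ax Γ φ) :
      DerivFrom Ax Γ ψ

/-- `Γ` is consistent in the system E^Δ + `Ax`: no contradiction is derivable from `Γ`. -/
def Consistent {P : Type} (Ax Γ : Set (Formula P)) : Prop :=
  ¬ ∃ φ : Formula P, DerivFrom Ax Γ φ ∧ DerivFrom Ax Γ (Formula.neg φ)

/-- The axiom ΔM: all instances of Δφ → Δ(φ ∨ ψ) ∨ Δ(¬φ ∨ χ). -/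
def AxDeltaM {P : Type} : Set (Formula P) :=
  {f | ∃ φ ψ χ : Formula P,
     f = Formula.imp (Formula.delta φ)
           (Formula.or (Formula.delta (Formula.or φ ψ))
                       (Formula.delta (Formula.or (Formula.neg φ) χ)))}

/-- The axiom ΔC: all instances of (Δφ ∧ Δψ) → Δ(φ ∧ ψ). -/
def AxDeltaC {P : Type} : Set (Formula P) :=
  {f | ∃ φ ψ : Formula P,
     f = Formula.imp (Formula.and (Formula.delta φ) (Formula.delta ψ))
           (Formula.delta (Formula.and φ ψ))}

/-- The axiom ΔN: Δ⊤. -/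
noncomputable def AxDeltaN (P : Type) [Nonempty P] : Set (Formula P) :=
  {Formula.delta (Formula.top P)}

/-!
The canonical model has the maximal consistent sets as states, and at a state `s` the
neighbourhoods are the supersets of proof sets `‖φ‖` such that `Δ(φ ∨ χ) ∈ s` for every `χ`;
these are closed under supersets by construction. In the truth lemma, `Δφ ∈ s` makes `φ` or `¬φ`
such a formula by ΔM: otherwise some `Δ(φ ∨ ψ)` and some `Δ(¬φ ∨ χ)` are both missing
from `s`. Conversely, if `‖ψ‖ ⊆ ‖φ‖` then `⊢ (ψ ∨ φ) ↔ φ`, so REΔ turns `Δ(ψ ∨ φ) ∈ s`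
into `Δφ ∈ s`, and ΔEqu handles the case of `¬φ`.
-/

open Formula

variable {P : Type}

section Tautologies

theorem Tautology.imp_self (φ : Formula P) : Tautology (imp φ φ) := by
  intro v hn ha
  simp only [imp, hn, ha]
  cases v φ <;> rfl

theorem Tautology.imp_intro (φ ψ : Formula P) : Tautology (imp ψ (imp φ ψ)) := by
  intro v hn ha
  simp only [imp, hn, ha]
  cases v φ <;> cases v ψ <;> rfl

theorem Tautology.imp_distrib (φ ψ χ : Formula P) :
    Tautology (imp (imp φ (imp ψ χ)) (imp (imp φ ψ) (imp φ χ))) := by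
  intro v hn ha
  simp only [imp, hn, ha]
  cases v φ <;> cases v ψ <;> cases v χ <;> rfl

theorem Tautology.neg_intro (φ ψ : Formula P) :
    Tautology (imp (imp φ ψ) (imp (imp φ (neg ψ)) (neg φ))) := by
  intro v hn ha
  simp only [imp, hn, ha]
  cases v φ <;> cases v ψ <;> rfl

theorem Tautology.and_left (φ ψ : Formula P) : Tautology (imp (Formula.and φ ψ) φ) := by
  intro v hn ha
  simp only [imp, hn, ha]
  cases v φ <;> cases v ψ <;> rfl

theorem Tautology.and_right (φ ψ : Formula P) : Tautology (imp (Formula.and φ ψ) ψ) := by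
  intro v hn ha
  simp only [imp, hn, ha]
  cases v φ <;> cases v ψ <;> rfl

theorem Tautology.and_intro (φ ψ : Formula P) :
    Tautology (imp φ (imp ψ (Formula.and φ ψ))) := by
  intro v hn ha
  simp only [imp, hn, ha]
  cases v φ <;> cases v ψ <;> rfl

theorem Tautology.iff_mp (φ ψ : Formula P) : Tautology (imp (iffF φ ψ) (imp φ ψ)) := by
  intro v hn ha
  simp only [imp, iffF, hn, ha]
  cases v φ <;> cases v ψ <;> rfl

theorem Tautology.iff_mpr (φ ψ : Formula P) : Tautology (imp (iffF φ ψ) (imp ψ φ)) := by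
  intro v hn ha
  simp only [imp, iffF, hn, ha]
  cases v φ <;> cases v ψ <;> rfl

theorem Tautology.or_iff_right_of_imp (φ ψ : Formula P) :
    Tautology (imp (imp ψ φ) (iffF (Formula.or ψ φ) φ)) := by
  intro v hn ha
  simp only [imp, iffF, Formula.or, hn, ha]
  cases v φ <;> cases v ψ <;> rfl

end Tautologies

section Derivations

variable {Ax Γ : Set (Formula P)} {φ ψ : Formula P}

theorem DerivFrom.mp_tautology (h : Tautology (imp φ ψ)) (hφ : DerivFrom Ax Γ φ) :
    DerivFrom Ax Γ ψ :=
  .mp (.thm (.taut h)) hφ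

theorem DerivFrom.mono {Γ' : Set (Formula P)} (h : DerivFrom Ax Γ φ) (hΓ : Γ ⊆ Γ') :
    DerivFrom Ax Γ' φ := by
  induction h with
  | mem h => exact .mem (hΓ h)
  | thm h => exact .thm h
  | mp _ _ ih₁ ih₂ => exact .mp ih₁ ih₂

theorem DerivFrom.deduction (h : DerivFrom Ax (insert φ Γ) ψ) : DerivFrom Ax Γ (imp φ ψ) := by
  induction h with
  | mem h =>
    rcases Set.mem_insert_iff.mp h with rfl | h
    · exact .thm (.taut (.imp_self _))
    · exact (DerivFrom.mem h).mp_tautology (.imp_intro _ _)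
  | thm h => exact (DerivFrom.thm h).mp_tautology (.imp_intro _ _)
  | mp _ _ ih₁ ih₂ => exact .mp (ih₁.mp_tautology (.imp_distrib _ _ _)) ih₂

theorem deriv_of_derivFrom_empty (h : DerivFrom Ax ∅ φ) : Deriv Ax φ := by
  induction h with
  | mem h => exact absurd h (Set.notMem_empty _)
  | thm h => exact h
  | mp _ _ ih₁ ih₂ => exact .mp ih₁ ih₂

theorem derivFrom_neg_of_not_consistent_insert (h : ¬Consistent Ax (insert φ Γ)) :
    DerivFrom Ax Γ (neg φ) := by
  obtain ⟨ψ, h₁, h₂⟩ := not_not.mp h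
  exact .mp (h₁.deduction.mp_tautology (.neg_intro φ ψ)) h₂.deduction

theorem DerivFrom.exists_mem_of_sUnion {c : Set (Set (Formula P))} (hne : c.Nonempty)
    (hc : DirectedOn (· ⊆ ·) c) (h : DerivFrom Ax (⋃₀ c) φ) : ∃ t ∈ c, DerivFrom Ax t φ := by
  induction h with
  | mem h =>
    obtain ⟨t, ht, hφ⟩ := h
    exact ⟨t, ht, .mem hφ⟩
  | thm h => exact ⟨hne.some, hne.some_mem, .thm h⟩
  | mp _ _ ih₁ ih₂ =>
    obtain ⟨t₁, ht₁, h₁⟩ := ih₁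
    obtain ⟨t₂, ht₂, h₂⟩ := ih₂
    obtain ⟨t, ht, h₁t, h₂t⟩ := hc t₁ ht₁ t₂ ht₂
    exact ⟨t, ht, .mp (h₁.mono h₁t) (h₂.mono h₂t)⟩

end Derivations

section MaximalConsistent

def MaximalConsistent (Ax s : Set (Formula P)) : Prop :=
  Maximal (Consistent Ax) s

variable {Ax Γ s : Set (Formula P)} {φ ψ : Formula P}

theorem exists_maximalConsistent_superset (hΓ : Consistent Ax Γ) :
    ∃ s, Γ ⊆ s ∧ MaximalConsistent Ax s := by
  refine zorn_subset_nonempty {t | Consistent Ax t} (fun c hcons hchain hne => ?_) Γ hΓ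
  refine ⟨⋃₀ c, ?_, fun t ht => Set.subset_sUnion_of_mem ht⟩
  rintro ⟨φ, hpos, hneg⟩
  obtain ⟨t₁, ht₁, h₁⟩ := hpos.exists_mem_of_sUnion hne hchain.directedOn
  obtain ⟨t₂, ht₂, h₂⟩ := hneg.exists_mem_of_sUnion hne hchain.directedOn
  rcases hchain.total ht₁ ht₂ with h | h
  · exact hcons ht₂ ⟨φ, h₁.mono h, h₂⟩
  · exact hcons ht₁ ⟨φ, h₁, h₂.mono h⟩

namespace MaximalConsistent

theorem not_consistent_insert (hs : MaximalConsistent Ax s) (hφ : φ ∉ s) :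
    ¬Consistent Ax (insert φ s) := fun hcons =>
  hφ (hs.eq_of_subset hcons (Set.subset_insert φ s) ▸ Set.mem_insert φ s)

theorem mem_of_derivFrom (hs : MaximalConsistent Ax s) (h : DerivFrom Ax s φ) : φ ∈ s := by
  by_contra hφ
  exact hs.prop ⟨φ, h, derivFrom_neg_of_not_consistent_insert (hs.not_consistent_insert hφ)⟩

theorem mem_of_tautology_imp (hs : MaximalConsistent Ax s) (h : Tautology (imp φ ψ))
    (hφ : φ ∈ s) : ψ ∈ s :=
  hs.mem_of_derivFrom ((DerivFrom.mem hφ).mp_tautology h)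

theorem mem_iff_of_deriv_iffF (hs : MaximalConsistent Ax s) (h : Deriv Ax (iffF φ ψ)) :
    φ ∈ s ↔ ψ ∈ s :=
  ⟨fun hφ => hs.mem_of_derivFrom (.mp (.thm (.mp (.taut (.iff_mp φ ψ)) h)) (.mem hφ)),
    fun hψ => hs.mem_of_derivFrom (.mp (.thm (.mp (.taut (.iff_mpr φ ψ)) h)) (.mem hψ))⟩

theorem neg_mem_iff (hs : MaximalConsistent Ax s) : neg φ ∈ s ↔ φ ∉ s :=
  ⟨fun hn hφ => hs.prop ⟨φ, .mem hφ, .mem hn⟩, fun hφ =>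
    hs.mem_of_derivFrom (derivFrom_neg_of_not_consistent_insert (hs.not_consistent_insert hφ))⟩

theorem and_mem_iff (hs : MaximalConsistent Ax s) : Formula.and φ ψ ∈ s ↔ φ ∈ s ∧ ψ ∈ s :=
  ⟨fun h => ⟨hs.mem_of_tautology_imp (.and_left φ ψ) h, hs.mem_of_tautology_imp (.and_right φ ψ) h⟩,
    fun ⟨hφ, hψ⟩ => hs.mem_of_derivFrom
      (.mp ((DerivFrom.mem hφ).mp_tautology (.and_intro φ ψ)) (.mem hψ))⟩

theorem or_mem_iff (hs : MaximalConsistent Ax s) : Formula.or φ ψ ∈ s ↔ φ ∈ s ∨ ψ ∈ s := by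
  rw [Formula.or, hs.neg_mem_iff, hs.and_mem_iff, hs.neg_mem_iff, hs.neg_mem_iff]
  tauto

end MaximalConsistent

end MaximalConsistent

section Canonical

variable (Ax : Set (Formula P))

abbrev CanonicalState : Type := {s : Set (Formula P) // MaximalConsistent Ax s}

def proofSet (φ : Formula P) : Set (CanonicalState Ax) := {s | φ ∈ s.1}

def canonicalN (s : CanonicalState Ax) : Set (Set (CanonicalState Ax)) :=
  {X | ∃ φ, proofSet Ax φ ⊆ X ∧ ∀ χ, delta (Formula.or φ χ) ∈ s.1}

def canonicalModel [Nonempty (CanonicalState Ax)] : NbhdModel P where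
  S := CanonicalState Ax
  nonempty := inferInstance
  N := canonicalN Ax
  V p := proofSet Ax (atom p)

variable {Ax}

theorem supersetClosed_canonicalN : SupersetClosed (canonicalN Ax) :=
  fun _ _ _ ⟨φ, hφX, hφ⟩ hXY => ⟨φ, hφX.trans hXY, hφ⟩

theorem proofSet_neg (φ : Formula P) : proofSet Ax (neg φ) = (proofSet Ax φ)ᶜ :=
  Set.ext fun s => s.2.neg_mem_iff

theorem proofSet_and (φ ψ : Formula P) :
    proofSet Ax (Formula.and φ ψ) = proofSet Ax φ ∩ proofSet Ax ψ :=
  Set.ext fun s => s.2.and_mem_iff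

theorem deriv_imp_of_proofSet_subset {φ ψ : Formula P}
    (h : proofSet Ax φ ⊆ proofSet Ax ψ) : Deriv Ax (imp φ ψ) := by
  by_contra hnd
  have hcons : Consistent Ax (insert (Formula.and φ (neg ψ)) ∅) := by
    by_contra hincons
    exact hnd (deriv_of_derivFrom_empty (derivFrom_neg_of_not_consistent_insert hincons))
  obtain ⟨s, hsub, hs⟩ := exists_maximalConsistent_superset hcons
  obtain ⟨hφ, hnψ⟩ := hs.and_mem_iff.mp (hsub (Set.mem_insert _ _))
  exact hs.neg_mem_iff.mp hnψ (h (show ⟨s, hs⟩ ∈ proofSet Ax φ from hφ))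

theorem delta_mem_of_proofSet_subset {φ ψ : Formula P} (s : CanonicalState Ax)
    (hsub : proofSet Ax ψ ⊆ proofSet Ax φ) (hψ : delta (Formula.or ψ φ) ∈ s.1) :
    delta φ ∈ s.1 :=
  (s.2.mem_iff_of_deriv_iffF
    (.re (.mp (.taut (.or_iff_right_of_imp φ ψ)) (deriv_imp_of_proofSet_subset hsub)))).mp hψ

theorem delta_or_mem_of_delta_mem (hM : AxDeltaM ⊆ Ax) {s : Set (Formula P)}
    (hs : MaximalConsistent Ax s) {φ : Formula P} (h : delta φ ∈ s) :
    (∀ χ, delta (Formula.or φ χ) ∈ s) ∨ ∀ χ, delta (Formula.or (neg φ) χ) ∈ s := by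
  by_contra! ⟨⟨ψ, hψ⟩, ⟨χ, hχ⟩⟩
  have hax := hs.mem_of_derivFrom (.mp (.thm (.ax (hM ⟨φ, ψ, χ, rfl⟩))) (.mem h))
  exact (hs.or_mem_iff.mp hax).elim hψ hχ

theorem delta_mem_iff (hM : AxDeltaM ⊆ Ax) (s : CanonicalState Ax) (φ : Formula P) :
    delta φ ∈ s.1 ↔ proofSet Ax φ ∈ canonicalN Ax s ∨ (proofSet Ax φ)ᶜ ∈ canonicalN Ax s := by
  rw [← proofSet_neg]
  refine ⟨fun h => (delta_or_mem_of_delta_mem hM s.2 h).imp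
    (fun h => ⟨φ, subset_rfl, h⟩) (fun h => ⟨neg φ, subset_rfl, h⟩), ?_⟩
  rintro (⟨ψ, hsub, hψ⟩ | ⟨ψ, hsub, hψ⟩)
  · exact delta_mem_of_proofSet_subset s hsub (hψ φ)
  · exact (s.2.mem_iff_of_deriv_iffF (.equ φ)).mpr (delta_mem_of_proofSet_subset s hsub (hψ _))

theorem truthSet_canonicalModel (hM : AxDeltaM ⊆ Ax) [Nonempty (CanonicalState Ax)]
    (φ : Formula P) : (canonicalModel Ax).truthSet φ = proofSet Ax φ := by
  induction φ with
  | atom p => rfl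
  | neg φ ih => exact (congrArg compl ih).trans (proofSet_neg φ).symm
  | and φ ψ ih₁ ih₂ => exact (congrArg₂ (· ∩ ·) ih₁ ih₂).trans (proofSet_and φ ψ).symm
  | delta φ ih =>
    ext s
    change _ ∨ _ ↔ _
    rw [ih]
    exact (delta_mem_iff hM s φ).symm

end Canonical

theorem M_strongly_complete_general {P : Type}
    (Γ : Set (Formula P)) (hcon : Consistent AxDeltaM Γ) :
    ∃ (M : NbhdModel P) (s : M.S), SupersetClosed M.N ∧ ∀ φ ∈ Γ, M.sat s φ := by
  obtain ⟨s, hΓs, hs⟩ := exists_maximalConsistent_superset hcon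
  have : Nonempty (CanonicalState AxDeltaM) := ⟨⟨s, hs⟩⟩
  refine ⟨canonicalModel AxDeltaM, ⟨s, hs⟩, supersetClosed_canonicalN, fun φ hφ => ?_⟩
  change _ ∈ _
  rw [truthSet_canonicalModel subset_rfl]
  exact hΓs hφ

/-- the monotone contingency logic M^Δ = E^Δ + ΔM is strongly complete
with respect to the class of (m)-frames: every M^Δ-consistent set of formulas is
satisfiable at some state of some neighborhood model whose neighborhood function at
every state is closed under supersets. -/
theorem M_strongly_complete {P : Type} [Nonempty P]
    (Γ : Set (Formula P)) (hcon : Consistent AxDeltaM Γ) :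
    ∃ (M : NbhdModel P) (s : M.S), SupersetClosed M.N ∧ ∀ φ ∈ Γ, M.sat s φ :=
  M_strongly_complete_general Γ hcon
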